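/- Let G be a block graph of order n that is not a complete graph. If ι(G) = n/3, then every end-block of G has at most three vertices. -/

import Mathlib

open SimpleGraph Set

/-- The closed neighborhood `N[D]` of a set of vertices. -/
def closedNbhd {V : Type*} (G : SimpleGraph V) (D : Set V) : Set V :=
  {w | w ∈ D ∨ ∃ v ∈ D, G.Adj v w}

/-- `D` is an isolating set: the vertices outside `N[D]` form an independent set. -/
def IsIsolating {V : Type*} (G : SimpleGraph V) (D : Set V) : Prop :=
  ∀ a b : V, a ∉ closedNbhd G D → b ∉ closedNbhd G D → ¬ G.Adj a b

/-- The isolation number: minimum cardinality of an isolating set. -/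
noncomputable def isolNum {V : Type*} (G : SimpleGraph V) : ℕ :=
  sInf {k | ∃ D : Set V, IsIsolating G D ∧ D.ncard = k}

/-- `v` is a cut vertex of `G`. -/
def IsCutVertex {V : Type*} (G : SimpleGraph V) (v : V) : Prop :=
  G.Connected ∧ ¬ (G.induce {w | w ≠ v}).Connected

/-- `B` is a block of `G`: a maximal connected set of vertices inducing a subgraph
without cut vertices. -/
def IsBlock {V : Type*} (G : SimpleGraph V) (B : Set V) : Prop :=
  (G.induce B).Connected ∧ (∀ v, ¬ IsCutVertex (G.induce B) v) ∧
    ∀ B' : Set V, B ⊆ B' → (G.induce B').Connected →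
      (∀ v, ¬ IsCutVertex (G.induce B') v) → B' = B

/-- A block graph: a connected graph all of whose blocks are complete. -/
def IsBlockGraph {V : Type*} (G : SimpleGraph V) : Prop :=
  G.Connected ∧ ∀ B : Set V, IsBlock G B → ∀ x ∈ B, ∀ y ∈ B, x ≠ y → G.Adj x y

/-- `v` is simplicial: its closed neighborhood induces a complete graph. -/
def Simplicial {V : Type*} (G : SimpleGraph V) (v : V) : Prop :=
  ∀ x ∈ G.neighborSet v, ∀ y ∈ G.neighborSet v, x ≠ y → G.Adj x y

/-- An end-block: a block containing at most one cut vertex of `G`. -/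
def IsEndBlock {V : Type*} (G : SimpleGraph V) (B : Set V) : Prop :=
  IsBlock G B ∧ {v ∈ B | IsCutVertex G v}.Subsingleton

/-!
Let `B` be an end-block with at least four vertices. Only the cut vertex of `B` can have
neighbours outside `B`, so choose three vertices `T ⊆ B` containing it and delete the other
`|B| - 3` vertices of the clique `B`; what remains is connected, with `n - |B| + 3` vertices.

It has an isolating set `D` with `3 |D| ≤ n - |B| + 3`, by the bound `ι ≤ n / 3` for connected
block graphs on at least three vertices. That bound is proved by induction: root the graph at
`r`, and let the branch of `v` be the set of vertices that `v` separates from `r`. Take `y`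
whose branch has at least two vertices and is smallest among such branches. Every vertex in the
branch of `y` is either a neighbour of `y` or a pendant vertex hanging on one, so `{y}` isolates
`y` together with its branch (at least three vertices), and the induction continues on the
component of `r` left after deleting them.

Two vertices of `T` have all their neighbours in `B` and are adjacent, so `D` must meet `B`. Then
`D` dominates the clique `B` and isolates all of `G`, whence `3 ι(G) ≤ n - |B| + 3 < n`.
-/

namespace SimpleGraph

variable {V : Type*} {G H : SimpleGraph V} {S T W X : Set V} {a b q r s u v w x z : V}

/-- The edges of `G` inside `S`, as a graph on all of `V`: unlike `G.induce S`, this needs no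
subtypes as `S` shrinks. -/
def restrict (G : SimpleGraph V) (S : Set V) : SimpleGraph V where
  Adj x y := x ∈ S ∧ y ∈ S ∧ G.Adj x y
  symm := ⟨fun _ _ h => ⟨h.2.1, h.1, h.2.2.symm⟩⟩
  loopless := ⟨fun _ h => h.2.2.ne rfl⟩

lemma restrict_le (G : SimpleGraph V) (S : Set V) : G.restrict S ≤ G := fun _ _ h => h.2.2

lemma restrict_mono (h : S ⊆ T) : G.restrict S ≤ G.restrict T :=
  fun _ _ hxy => ⟨h hxy.1, h hxy.2.1, hxy.2.2⟩

lemma Reachable.restrict_mono (h : S ⊆ T) (hr : (G.restrict S).Reachable a b) :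
    (G.restrict T).Reachable a b :=
  hr.mono (SimpleGraph.restrict_mono h)

lemma reachable_restrict_of_adj (ha : a ∈ S) (hb : b ∈ S) (h : G.Adj a b) :
    (G.restrict S).Reachable a b :=
  Adj.reachable (G := G.restrict S) ⟨ha, hb, h⟩

lemma Reachable.mem_restrict_left (hr : (G.restrict S).Reachable a b) (hab : a ≠ b) : a ∈ S := by
  obtain ⟨p⟩ := hr
  cases p with
  | nil => exact absurd rfl hab
  | cons h _ => exact h.1

lemma Reachable.mem_restrict_right (hr : (G.restrict S).Reachable a b) (hab : a ≠ b) : b ∈ S :=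
  hr.symm.mem_restrict_left hab.symm

lemma Reachable.mem_restrict (hr : (G.restrict S).Reachable a b) (ha : a ∈ S) : b ∈ S := by
  rcases eq_or_ne a b with rfl | hab
  exacts [ha, hr.mem_restrict_right hab]

lemma Walk.support_subset_of_restrict (p : (G.restrict S).Walk a b) (ha : a ∈ S) :
    ∀ u ∈ p.support, u ∈ S := by
  classical
  exact fun _ hu => (p.takeUntil _ hu).reachable.mem_restrict ha

lemma Walk.reachable_restrict (p : H.Walk a b) (hH : H ≤ G) (hS : ∀ u ∈ p.support, u ∈ S) :
    (G.restrict S).Reachable a b := by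
  induction p with
  | nil => rfl
  | cons h q ih =>
    simp only [support_cons, List.mem_cons, forall_eq_or_imp] at hS
    exact (reachable_restrict_of_adj hS.1 (hS.2 _ q.start_mem_support) (hH h)).trans (ih hS.2)

lemma Reachable.exists_isPath_restrict (hr : (G.restrict S).Reachable a b) (ha : a ∈ S) :
    ∃ p : G.Walk a b, p.IsPath ∧ ∀ u ∈ p.support, u ∈ S := by
  obtain ⟨p, hp⟩ := hr.exists_isPath
  refine ⟨p.mapLe (G.restrict_le S), hp.mapLe _, ?_⟩
  simpa [Walk.support_mapLe_eq_support] using p.support_subset_of_restrict ha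

/-- A path from `a` to `b` inside `S` either avoids `v` or reaches `v` before `b`. -/
lemma Reachable.restrict_sdiff_or (hr : (G.restrict S).Reachable a b) (hvb : v ≠ b) :
    (G.restrict (S \ {v})).Reachable a b ∨ (G.restrict (S \ {b})).Reachable a v := by
  obtain ⟨p⟩ := hr
  induction p with
  | nil => exact Or.inl .rfl
  | @cons a c b h q ih =>
    rcases eq_or_ne a v with rfl | hav
    · exact Or.inr .rfl
    rcases eq_or_ne a b with rfl | hab
    · exact Or.inl .rfl
    rcases ih hvb with hcb | hcv
    · have hc : c ∈ S \ {v} := by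
        rcases eq_or_ne c b with rfl | hcb'
        exacts [⟨h.2.1, hvb.symm⟩, hcb.mem_restrict_left hcb']
      exact Or.inl ((reachable_restrict_of_adj (S := S \ {v}) ⟨h.1, hav⟩ hc h.2.2).trans hcb)
    · have hc : c ∈ S \ {b} := by
        rcases eq_or_ne c v with rfl | hcv'
        · exact ⟨h.2.1, hvb⟩
        · exact hcv.mem_restrict_left hcv'
      exact Or.inr ((reachable_restrict_of_adj (S := S \ {b}) ⟨h.1, hab⟩ hc h.2.2).trans hcv)

lemma Reachable.restrict_of_closed (hT : ∀ u ∈ T, ∀ w ∈ S, G.Adj u w → w ∈ T) (ha : a ∈ T)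
    (hr : (G.restrict S).Reachable a b) : (G.restrict T).Reachable a b := by
  obtain ⟨p⟩ := hr
  induction p with
  | nil => rfl
  | cons h q ih =>
    have hc := hT _ ha _ h.2.1 h.2.2
    exact (reachable_restrict_of_adj ha hc h.2.2).trans (ih hc)

lemma reachable_induce_of_restrict (p : (G.restrict S).Walk a b) (ha : a ∈ S) (hb : b ∈ S) :
    (G.induce S).Reachable ⟨a, ha⟩ ⟨b, hb⟩ := by
  induction p with
  | nil => rfl
  | cons h q ih =>
    exact (Adj.reachable (G := G.induce S) (u := ⟨_, ha⟩) (v := ⟨_, h.2.1⟩) h.2.2).trans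
      (ih h.2.1 hb)

lemma induce_connected_iff :
    (G.induce S).Connected ↔ S.Nonempty ∧ ∀ a ∈ S, ∀ b ∈ S, (G.restrict S).Reachable a b := by
  refine ⟨fun h => ⟨h.nonempty.elim fun u => ⟨u, u.2⟩, fun a ha b hb => ?_⟩,
    fun ⟨⟨u, hu⟩, h⟩ => ?_⟩
  · let f : G.induce S →g G.restrict S := ⟨Subtype.val, fun {x y} hxy => ⟨x.2, y.2, hxy⟩⟩
    exact (h.preconnected ⟨a, ha⟩ ⟨b, hb⟩).map f
  · have : Nonempty S := ⟨⟨u, hu⟩⟩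
    exact ⟨fun x y => (h x x.2 y y.2).elim fun p => reachable_induce_of_restrict p x.2 y.2⟩

lemma induce_connected_of_hub (hr : r ∈ S) (h : ∀ u ∈ S, (G.restrict S).Reachable u r) :
    (G.induce S).Connected :=
  induce_connected_iff.2 ⟨⟨r, hr⟩, fun a ha b hb => (h a ha).trans (h b hb).symm⟩

lemma induce_insert_connected (hS : (G.induce S).Connected) (ha : a ∈ S) (hxa : G.Adj x a) :
    (G.induce (insert x S)).Connected := by
  refine induce_connected_of_hub (Or.inr ha) ?_
  rintro u (rfl | hu)
  · exact reachable_restrict_of_adj (Or.inl rfl) (Or.inr ha) hxa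
  · exact (induce_connected_iff.1 hS |>.2 u hu a ha).restrict_mono (Set.subset_insert x S)

lemma Walk.IsPath.reachable_restrict_sdiff {p : G.Walk a b} (hp : p.IsPath)
    (hT : ∀ u ∈ p.support, u ∈ T) (hw : w ∈ p.support) (hwx : w ≠ x) :
    (G.restrict (T \ {x})).Reachable w a ∨ (G.restrict (T \ {x})).Reachable w b := by
  induction p with
  | nil =>
    obtain rfl := List.mem_singleton.1 hw
    exact Or.inl .rfl
  | @cons a c b h q ih =>
    rw [Walk.cons_isPath_iff] at hp
    simp only [Walk.support_cons, List.mem_cons, forall_eq_or_imp] at hT hw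
    rcases hw with rfl | hw
    · exact Or.inl .rfl
    rcases ih hp.1 hT.2 hw with hwc | hwb
    · rcases eq_or_ne a x with rfl | hax
      · exact Or.inr (hwc.trans (q.reachable_restrict le_rfl
          fun u hu => ⟨hT.2 u hu, fun hux => hp.2 (hux ▸ hu)⟩))
      · exact Or.inl (hwc.trans (reachable_restrict_of_adj
          (hwc.mem_restrict ⟨hT.2 w hw, hwx⟩) ⟨hT.1, hax⟩ h.symm))
    · exact Or.inr hwb

-- As in `IsBlock`, a single vertex does not qualify: deleting it leaves an empty graph.
def IsNonseparable (G : SimpleGraph V) (S : Set V) : Prop :=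
  (G.induce S).Connected ∧ ∀ s ∈ S, (G.induce (S \ {s})).Connected

lemma induce_induce_ne_connected_iff (s : S) :
    ((G.induce S).induce {w | w ≠ s}).Connected ↔ (G.induce (S \ {s.1})).Connected := by
  let e := (Embedding.induce (G := G) S).comp (Embedding.induce (G := G.induce S) {w | w ≠ s})
  have hrange : Set.range e = S \ {s.1} := by
    ext x
    constructor
    · rintro ⟨⟨⟨y, hy⟩, hys⟩, rfl⟩
      exact ⟨hy, fun h => hys (Subtype.ext h)⟩
    · rintro ⟨hx, hxs⟩
      exact ⟨⟨⟨x, hx⟩, fun h => hxs (congrArg Subtype.val h)⟩, rfl⟩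
  rw [e.isoInduceRange.connected_iff, hrange]

lemma isNonseparable_iff :
    IsNonseparable G S ↔ (G.induce S).Connected ∧ ∀ v, ¬ IsCutVertex (G.induce S) v := by
  simp only [IsNonseparable, IsCutVertex, not_and, not_not, induce_induce_ne_connected_iff]
  exact and_congr_right fun h => ⟨fun h' v _ => h' v v.2, fun h' s hs => h' ⟨s, hs⟩ h⟩

lemma isBlock_iff_maximal {B : Set V} : IsBlock G B ↔ Maximal (IsNonseparable G) B := by
  simp only [IsBlock, Maximal, isNonseparable_iff, and_assoc]
  refine and_congr_right fun _ => and_congr_right fun _ =>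
    ⟨fun h B' hB' hBB' => (h B' hBB' hB'.1 hB'.2).le,
      fun h B' hBB' hc hcut => (h ⟨hc, hcut⟩ hBB').antisymm hBB'⟩

lemma IsNonseparable.insert (hS : G.IsNonseparable S) (hx : x ∉ S) (ha : a ∈ S) (hb : b ∈ S)
    (hab : a ≠ b) (hxa : G.Adj x a) (hxb : G.Adj x b) : G.IsNonseparable (insert x S) := by
  refine ⟨induce_insert_connected hS.1 ha hxa, ?_⟩
  rintro s (rfl | hs)
  · rw [Set.insert_sdiff_self_of_notMem hx]
    exact hS.1
  rw [← Set.insert_sdiff_singleton_comm (ne_of_mem_of_not_mem hs hx).symm]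
  rcases eq_or_ne a s with rfl | has
  · exact induce_insert_connected (hS.2 a hs) ⟨hb, hab.symm⟩ hxb
  · exact induce_insert_connected (hS.2 s hs) ⟨ha, has⟩ hxa

lemma Connected.reachable_restrict_compl (hG : G.Connected) (hS : G.IsClique S)
    (hX : ∀ x ∈ X, G.neighborSet x ⊆ S) (hs : s ∈ S) (hsX : s ∉ X) (hu : u ∉ X) :
    (G.restrict Xᶜ).Reachable u s := by
  obtain ⟨p⟩ := hG.preconnected u s
  induction p with
  | nil => rfl
  | @cons u c s h q ih =>
    by_cases hc : c ∈ X
    · have huS : u ∈ S := hX c hc h.symm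
      rcases eq_or_ne u s with rfl | hus
      · rfl
      · exact reachable_restrict_of_adj hu hsX (hS huS hs hus)
    · exact (reachable_restrict_of_adj hu hc h).trans (ih hs hsX hc)

/-- The vertices of `W` that `v` separates from the root `r` inside `W`. -/
def branch (G : SimpleGraph V) (W : Set V) (r v : V) : Set V :=
  {z | z ∈ W ∧ z ≠ v ∧ ¬ (G.restrict (W \ {v})).Reachable r z}

lemma mem_branch_of_reachable (hz : z ∈ G.branch W r v)
    (h : (G.restrict (W \ {v})).Reachable z w) : w ∈ G.branch W r v := by
  have hw := h.mem_restrict ⟨hz.1, hz.2.1⟩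
  exact ⟨hw.1, hw.2, fun hr => hz.2.2 (hr.trans h.symm)⟩

lemma branch_self : G.branch W r r = W \ {r} := by
  ext z
  refine ⟨fun hz => ⟨hz.1, hz.2.1⟩, fun hz => ⟨hz.1, hz.2, fun h => ?_⟩⟩
  exact (h.mem_restrict_left (Ne.symm hz.2)).2 rfl

lemma branch_ssubset (hq : q ∈ G.branch W r v) (hrq : (G.restrict W).Reachable r q) :
    G.branch W r q ⊂ G.branch W r v := by
  refine Set.ssubset_iff_subset_ne.2 ⟨fun z hz => ⟨hz.1, ?_, fun hrz => ?_⟩,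
    fun h => (h ▸ hq).2.1 rfl⟩
  · rintro rfl
    rcases hrq.restrict_sdiff_or hq.2.1.symm with h | h
    exacts [hq.2.2 h, hz.2.2 h]
  · rcases hrz.restrict_sdiff_or hz.2.1.symm with h | h
    · exact hz.2.2 (h.restrict_mono (Set.sdiff_subset_sdiff_left Set.sdiff_subset))
    · exact hq.2.2 (h.restrict_mono Set.sdiff_subset)

lemma exists_minimal_large_branch [Finite V] (hr : r ∈ W) (hW3 : 3 ≤ W.ncard)
    (hW : ∀ b ∈ W, (G.restrict W).Reachable r b) :
    ∃ y ∈ W, 2 ≤ (G.branch W r y).ncard ∧ ∀ q ∈ G.branch W r y, (G.branch W r q).ncard ≤ 1 := by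
  have hr2 : 2 ≤ (G.branch W r r).ncard := by
    rw [branch_self, Set.ncard_sdiff_singleton_of_mem hr]
    omega
  obtain ⟨y, ⟨hy, hy2⟩, hmin⟩ := Set.exists_min_image {v | v ∈ W ∧ 2 ≤ (G.branch W r v).ncard}
    (fun v => (G.branch W r v).ncard) (Set.toFinite _) ⟨r, hr, hr2⟩
  refine ⟨y, hy, hy2, fun q hq => ?_⟩
  by_contra! hq2
  have := hmin q ⟨hq.1, hq2⟩
  have := Set.ncard_lt_ncard (branch_ssubset hq (hW q hq.1))
  omega

lemma reachable_of_mem_sdiff_insert_branch (hu : u ∈ W \ insert v (G.branch W r v)) :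
    (G.restrict (W \ {v})).Reachable r u :=
  by_contra fun h => hu.2 (Or.inr ⟨hu.1, fun e => hu.2 (Or.inl e), h⟩)

lemma mem_sdiff_insert_branch_of_adj (hu : u ∈ W \ insert v (G.branch W r v))
    (hw : w ∈ W \ {v}) (huw : G.Adj u w) : w ∈ W \ insert v (G.branch W r v) := by
  refine ⟨hw.1, ?_⟩
  rintro (rfl | hwb)
  · exact hw.2 rfl
  · exact hu.2 (Or.inr (mem_branch_of_reachable hwb
      (reachable_restrict_of_adj hw ⟨hu.1, fun h => hu.2 (Or.inl h)⟩ huw.symm)))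

lemma exists_adj_of_mem_sdiff_insert_branch (hu : u ∈ W \ insert v (G.branch W r v))
    (huv : (G.restrict W).Reachable u v) : ∃ w ∈ W \ insert v (G.branch W r v), G.Adj w v := by
  by_contra! h
  have hclosed : ∀ x ∈ W \ insert v (G.branch W r v), ∀ w ∈ W, G.Adj x w →
      w ∈ W \ insert v (G.branch W r v) :=
    fun x hx w hw hxw => mem_sdiff_insert_branch_of_adj hx ⟨hw, fun e => h x hx (e ▸ hxw)⟩ hxw
  exact ((huv.restrict_of_closed hclosed hu).mem_restrict hu).2 (Or.inl rfl)

end SimpleGraph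

lemma closedNbhd_mono {V : Type*} {G H : SimpleGraph V} {D D' : Set V} (hGH : G ≤ H)
    (hD : D ⊆ D') : closedNbhd G D ⊆ closedNbhd H D' := by
  rintro w (hw | ⟨v, hv, hvw⟩)
  exacts [Or.inl (hD hw), Or.inr ⟨v, hD hv, hGH hvw⟩]

lemma SimpleGraph.IsClique.subset_closedNbhd {V : Type*} {G : SimpleGraph V} {S D : Set V} {d : V}
    (hS : G.IsClique S) (hd : d ∈ D) (hdS : d ∈ S) :
    S ⊆ closedNbhd G D := fun x hx =>
  (eq_or_ne d x).elim (fun h => Or.inl (h ▸ hd)) fun h => Or.inr ⟨d, hd, hS hdS hx h⟩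

lemma IsIsolating.of_restrict {V : Type*} {G : SimpleGraph V} {W D : Set V}
    (hD : IsIsolating (G.restrict W) D) (hcov : Wᶜ ⊆ closedNbhd G D) : IsIsolating G D := by
  intro a b ha hb hab
  have hmono := closedNbhd_mono (G.restrict_le W) (subset_refl D)
  exact hD a b (fun h => ha (hmono h)) (fun h => hb (hmono h))
    ⟨by_contra fun h => ha (hcov h), by_contra fun h => hb (hcov h), hab⟩

lemma isolNum_le {V : Type*} {G : SimpleGraph V} {D : Set V} (hD : IsIsolating G D) :
    isolNum G ≤ D.ncard :=
  Nat.sInf_le ⟨D, hD, rfl⟩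

namespace IsBlockGraph

variable {V : Type*} [Finite V] {G : SimpleGraph V} {B S W : Set V} {a b r v x y z : V}

theorem isClique_of_isNonseparable (hbg : IsBlockGraph G) (hS : G.IsNonseparable S) :
    G.IsClique S := by
  obtain ⟨B, hSB, hB⟩ := Finite.exists_le_maximal hS
  exact fun x hx y hy hxy => hbg.2 B (isBlock_iff_maximal.2 hB) x (hSB hx) y (hSB hy) hxy

/-- The path closes a cycle through `v`; a cycle has no cut vertex, so it lies in a block. -/
theorem adj_of_reachable_restrict_compl (hbg : IsBlockGraph G) (hy : G.Adj v y) (hz : G.Adj v z)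
    (hyz : y ≠ z) (h : (G.restrict {v}ᶜ).Reachable y z) : G.Adj y z := by
  obtain ⟨p, hp, hpv⟩ := h.exists_isPath_restrict hy.ne.symm
  have hvp : v ∉ {u | u ∈ p.support} := fun h => hpv v h rfl
  have hcycle : G.IsNonseparable (insert v {u | u ∈ p.support}) := by
    refine ⟨induce_insert_connected p.connected_induce_support p.start_mem_support hy, ?_⟩
    rintro s (rfl | hs)
    · rw [Set.insert_sdiff_self_of_notMem hvp]
      exact p.connected_induce_support
    have hsv : s ≠ v := fun h => hvp (h ▸ hs)
    refine induce_connected_of_hub ⟨Or.inl rfl, hsv.symm⟩ ?_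
    rintro u ⟨rfl | hu, hus⟩
    · rfl
    have hT : ∀ u ∈ p.support, u ∈ insert v {u | u ∈ p.support} := fun u hu => Or.inr hu
    have hv : v ∈ insert v {u | u ∈ p.support} \ {s} := ⟨Or.inl rfl, hsv.symm⟩
    rcases hp.reachable_restrict_sdiff hT hu hus with hr | hr
    · exact hr.trans (reachable_restrict_of_adj (hr.mem_restrict ⟨hT u hu, hus⟩) hv hy.symm)
    · exact hr.trans (reachable_restrict_of_adj (hr.mem_restrict ⟨hT u hu, hus⟩) hv hz.symm)
  exact hbg.isClique_of_isNonseparable hcycle (Or.inr p.start_mem_support)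
    (Or.inr p.end_mem_support) hyz

theorem isCutVertex_of_adj (hbg : IsBlockGraph G) (hB : IsBlock G B) (hx : x ∈ B) (hy : y ∉ B)
    (hxy : G.Adj x y) : IsCutVertex G x := by
  refine ⟨hbg.1, fun hconn => hy ?_⟩
  have hB' := isBlock_iff_maximal.1 hB
  obtain ⟨⟨z, hzB, hzx⟩⟩ := (hB'.prop.2 x hx).nonempty
  have hxz : x ≠ z := Ne.symm hzx
  have hyz : G.Adj y z := hbg.adj_of_reachable_restrict_compl hxy (hbg.2 B hB x hx z hzB hxz)
    (fun h => hy (h ▸ hzB)) ((induce_connected_iff.1 hconn).2 y hxy.ne.symm z hzx)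
  rw [hB'.eq_of_subset (hB'.prop.insert hy hx hzB hxz hxy.symm hyz) (Set.subset_insert y B)]
  exact Set.mem_insert y B

/-- `q` is the second vertex of a shortest path from `y` to `z`: a detour around `q` would make
`y` adjacent to the third vertex of that path. -/
theorem exists_adj_mem_branch (hbg : IsBlockGraph G) (hz : z ∈ G.branch W r y)
    (hyz : ¬ G.Adj y z) (h : (G.restrict W).Reachable y z) :
    ∃ q ∈ G.branch W r y, G.Adj y q ∧ z ∈ G.branch W r q := by
  obtain ⟨p, hp, hlen⟩ := h.exists_path_of_dist
  cases p with
  | nil => exact absurd rfl hz.2.1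
  | @cons _ q _ h₁ p' =>
  cases p' with
  | nil => exact absurd h₁.2.2 hyz
  | @cons _ f _ h₂ p =>
  simp only [Walk.cons_isPath_iff, Walk.support_cons, List.mem_cons, not_or] at hp
  obtain ⟨⟨-, hqp⟩, hyq, hyp⟩ := hp
  have hyf : ¬ G.Adj y f := fun hadj => by
    have hadj' : (G.restrict W).Adj y f := ⟨h₁.1, h₂.2.1, hadj⟩
    have := dist_le (Walk.cons hadj' p)
    rw [← hlen, Walk.length_cons, Walk.length_cons, Walk.length_cons] at this
    omega
  have hpW := p.support_subset_of_restrict h₂.2.1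
  have hfz (x : V) (hx : x ∉ p.support) : (G.restrict (W \ {x})).Reachable f z :=
    p.reachable_restrict (restrict_le _ _) fun u hu => ⟨hpW u hu, fun h => hx (h ▸ hu)⟩
  have hfy : f ≠ y := fun h => hyp (h ▸ p.start_mem_support)
  have hq : q ∈ G.branch W r y := mem_branch_of_reachable hz
    ((hfz y hyp).symm.trans (reachable_restrict_of_adj ⟨h₂.2.1, hfy⟩ ⟨h₁.2.1, Ne.symm hyq⟩
      h₂.2.2.symm))
  refine ⟨q, hq, h₁.2.2, hz.1, fun h => hqp (h ▸ p.end_mem_support), fun hrz => ?_⟩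
  rcases hrz.restrict_sdiff_or hz.2.1.symm with h | h
  · exact hz.2.2 (h.restrict_mono (Set.sdiff_subset_sdiff_left Set.sdiff_subset))
  · have hyf' : (G.restrict {q}ᶜ).Reachable y f :=
      (((h.restrict_mono Set.sdiff_subset).symm.trans hrz).trans (hfz q hqp).symm).restrict_mono
        fun _ hu => hu.2
    exact hyf (hbg.adj_of_reachable_restrict_compl h₁.2.2.symm h₂.2.2 (Ne.symm hfy) hyf')

/-- A vertex of the branch of `y` that is not adjacent to `y` is a pendant vertex whose only
neighbour is adjacent to `y`; so `y` leaves no edge at its branch uncovered. -/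
theorem mem_sdiff_of_notMem_closedNbhd (hbg : IsBlockGraph G)
    (hW : ∀ a ∈ W, ∀ b ∈ W, (G.restrict W).Reachable a b) (hy : y ∈ W)
    (hsmall : ∀ q ∈ G.branch W r y, (G.branch W r q).ncard ≤ 1) {D : Set V} (hyD : y ∈ D)
    (ha : a ∉ closedNbhd (G.restrict W) D) (hb : b ∉ closedNbhd (G.restrict W) D)
    (hab : (G.restrict W).Adj a b) : a ∈ W \ insert y (G.branch W r y) := by
  refine ⟨hab.1, ?_⟩
  rintro (rfl | haB)
  · exact ha (Or.inl hyD)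
  have hya : ¬ G.Adj y a := fun h => ha (Or.inr ⟨y, hyD, hy, hab.1, h⟩)
  obtain ⟨q, hq, hyq, haq⟩ := hbg.exists_adj_mem_branch haB hya (hW y hy a hab.1)
  have hbq : b ≠ q := by
    rintro rfl
    exact hb (Or.inr ⟨y, hyD, hy, hab.2.1, hyq⟩)
  have hbq' : b ∈ G.branch W r q := mem_branch_of_reachable haq
    (reachable_restrict_of_adj ⟨hab.1, haq.2.1⟩ ⟨hab.2.1, hbq⟩ hab.2.2)
  exact hab.ne ((Set.ncard_le_one_iff (Set.toFinite _)).1 (hsmall q hq) haq hbq')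

theorem exists_isIsolating_restrict (hbg : IsBlockGraph G)
    (hW : ∀ a ∈ W, ∀ b ∈ W, (G.restrict W).Reachable a b) (hW3 : 3 ≤ W.ncard) :
    ∃ D ⊆ W, IsIsolating (G.restrict W) D ∧ 3 * D.ncard ≤ W.ncard := by
  induction hn : W.ncard using Nat.strong_induction_on generalizing W with
  | _ n ih =>
  obtain ⟨r, hr⟩ := Set.nonempty_of_ncard_ne_zero (by omega : W.ncard ≠ 0)
  obtain ⟨y, hy, hy2, hsmall⟩ := exists_minimal_large_branch hr hW3 (hW r hr)
  set W' := W \ insert y (G.branch W r y)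
  have hcard : W'.ncard + ((G.branch W r y).ncard + 1) = W.ncard := by
    rw [← Set.ncard_insert_of_notMem (fun h => h.2.1 rfl)]
    exact Set.ncard_sdiff_add_ncard_of_subset (Set.insert_subset hy fun _ h => h.1)
  have huncov {D : Set V} {a b : V} :=
    hbg.mem_sdiff_of_notMem_closedNbhd (D := D) (a := a) (b := b) hW hy hsmall
  by_cases h3 : 3 ≤ W'.ncard
  · have hW' : ∀ a ∈ W', ∀ b ∈ W', (G.restrict W').Reachable a b := fun a ha b hb =>
      ((reachable_of_mem_sdiff_insert_branch ha).symm.trans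
        (reachable_of_mem_sdiff_insert_branch hb)).restrict_of_closed
          (fun _ hu _ hw => mem_sdiff_insert_branch_of_adj hu hw) ha
    obtain ⟨D, hDW, hD, hD3⟩ := ih W'.ncard (by omega) hW' h3 rfl
    refine ⟨insert y D, Set.insert_subset hy (hDW.trans Set.sdiff_subset),
      fun a b ha hb hab => ?_, ?_⟩
    · have hmono : closedNbhd (G.restrict W') D ⊆ closedNbhd (G.restrict W) (insert y D) :=
        closedNbhd_mono (restrict_mono Set.sdiff_subset) (Set.subset_insert y D)
      exact hD a b (fun h => ha (hmono h)) (fun h => hb (hmono h))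
        ⟨huncov (Set.mem_insert y D) ha hb hab, huncov (Set.mem_insert y D) hb ha hab.symm,
          hab.2.2⟩
    · have := Set.ncard_insert_le y D
      omega
  · refine ⟨{y}, Set.singleton_subset_iff.2 hy, fun a b ha hb hab => ?_, by simp; omega⟩
    have haW' : a ∈ W' := huncov (Set.mem_singleton y) ha hb hab
    have hW'ab : W' = {a, b} := (Set.eq_of_subset_of_ncard_le
      (Set.pair_subset haW' (huncov (Set.mem_singleton y) hb ha hab.symm))
      (by rw [Set.ncard_pair hab.ne]; omega)).symm
    obtain ⟨w, hw, hwy⟩ : ∃ w ∈ W', G.Adj w y :=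
      exists_adj_of_mem_sdiff_insert_branch haW' (hW a hab.1 y hy)
    rw [hW'ab] at hw
    rcases hw with rfl | rfl
    · exact ha (Or.inr ⟨y, rfl, hy, hab.1, hwy.symm⟩)
    · exact hb (Or.inr ⟨y, rfl, hy, hab.2.1, hwy.symm⟩)

/-- Inside an end-block, only its cut vertex can have neighbours outside it. -/
theorem exists_subset_ncard_three (hbg : IsBlockGraph G) (hB : IsEndBlock G B)
    (h3 : 3 ≤ B.ncard) :
    ∃ T ⊆ B, T.ncard = 3 ∧ (∀ x ∈ B \ T, G.neighborSet x ⊆ B) ∧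
      1 < {t ∈ T | G.neighborSet t ⊆ B}.ncard := by
  set bd := {x ∈ B | ¬ G.neighborSet x ⊆ B}
  have hcut : ∀ x ∈ bd, x ∈ {v ∈ B | IsCutVertex G v} := fun x hx => by
    obtain ⟨y, hxy, hy⟩ := Set.not_subset.1 hx.2
    exact ⟨hx.1, hbg.isCutVertex_of_adj hB.1 hx.1 hy hxy⟩
  have hbd : bd.ncard ≤ 1 :=
    (Set.ncard_le_one_iff (Set.toFinite _)).2 fun ha hb => hB.2 (hcut _ ha) (hcut _ hb)
  obtain ⟨T, hbdT, hTB, hT3⟩ :=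
    Set.exists_subsuperset_card_eq (s := bd) (Set.sep_subset B _) (hbd.trans (by norm_num)) h3
  refine ⟨T, hTB, hT3, fun x hx => by_contra fun h => hx.2 (hbdT ⟨hx.1, h⟩), ?_⟩
  have hint : T \ bd ⊆ {t ∈ T | G.neighborSet t ⊆ B} :=
    fun t ht => ⟨ht.1, by_contra fun h => ht.2 ⟨hTB ht.1, h⟩⟩
  have := Set.ncard_le_ncard hint
  have := Set.ncard_sdiff hbdT
  omega

theorem three_mul_isolNum_add_ncard_le [Fintype V] (hbg : IsBlockGraph G) (hB : IsEndBlock G B)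
    (h3 : 3 ≤ B.ncard) : 3 * isolNum G + B.ncard ≤ Fintype.card V + 3 := by
  obtain ⟨T, hTB, hT3, hX, hint⟩ := hbg.exists_subset_ncard_three hB h3
  obtain ⟨t, t', ht, ht', htt'⟩ := (Set.one_lt_ncard_iff (Set.toFinite _)).1 hint
  have hclique : G.IsClique B := hbg.2 B hB.1
  have hTW : T ⊆ (B \ T)ᶜ := fun x hx h => h.2 hx
  have hW : ∀ a ∈ (B \ T)ᶜ, ∀ b ∈ (B \ T)ᶜ, (G.restrict (B \ T)ᶜ).Reachable a b :=
    fun a ha b hb => (hbg.1.reachable_restrict_compl hclique hX (hTB ht.1) (hTW ht.1) ha).trans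
      (hbg.1.reachable_restrict_compl hclique hX (hTB ht.1) (hTW ht.1) hb).symm
  obtain ⟨D, -, hD, hD3⟩ :=
    hbg.exists_isIsolating_restrict hW (hT3 ▸ Set.ncard_le_ncard hTW)
  -- `D` covers one of the adjacent vertices `t`, `t'`, and it can only do so from inside `B`
  have hBD : B ⊆ closedNbhd G D := by
    have hcov : ∀ s ∈ {t ∈ T | G.neighborSet t ⊆ B},
        s ∈ closedNbhd (G.restrict (B \ T)ᶜ) D → B ⊆ closedNbhd G D := by
      rintro s ⟨hsT, hsB⟩ (hs | ⟨d, hd, hds⟩)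
      · exact hclique.subset_closedNbhd hs (hTB hsT)
      · exact hclique.subset_closedNbhd hd (hsB hds.2.2.symm)
    by_contra h
    exact hD t t' (fun hc => h (hcov t ht hc)) (fun hc => h (hcov t' ht' hc))
      ⟨hTW ht.1, hTW ht'.1, hclique (hTB ht.1) (hTB ht'.1) htt'⟩
  have hiso : IsIsolating G D := hD.of_restrict fun x hx => hBD (compl_compl (B \ T) ▸ hx).1
  have := isolNum_le hiso
  have hn := Set.ncard_add_ncard_compl (B \ T)
  rw [Nat.card_eq_fintype_card] at hn
  have := Set.ncard_sdiff hTB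
  omega

end IsBlockGraph

theorem stmt6_general {V : Type*} [Fintype V] (G : SimpleGraph V)
    (hbg : IsBlockGraph G)
    (hiso : 3 * isolNum G = Fintype.card V) :
    ∀ B : Set V, IsEndBlock G B → B.ncard ≤ 3 := by
  intro B hB
  by_contra! h
  have := hbg.three_mul_isolNum_add_ncard_le hB h.le
  omega

theorem stmt6 {V : Type*} [Fintype V] (G : SimpleGraph V)
    (hbg : IsBlockGraph G) (hne : G ≠ ⊤)
    (hiso : 3 * isolNum G = Fintype.card V) :
    ∀ B : Set V, IsEndBlock G B → B.ncard ≤ 3 :=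
  stmt6_general G hbg hiso
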